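/- arXiv:0707.0994 — 4 statements merged into one kernel-verified Lean document; each statement's English description precedes it below -/
import Mathlib

section
/- Suppose the topology of E is generated by an increasing sequence of seminorms (p_n)_{n∈ℕ}. Let A ⊆ G_E be internal, non-empty, with a sharply bounded representative net (A_ε), and let B = [(B_ε)] ⊆ G_E be internal. Then A ⊆ B if and only if for every n ∈ ℕ the net (sup_{u∈A_ε} d_n(u, B_ε))_ε is negligible; this characterization holds for every choice of sharply bounded representative of A and of representative of B. Moreover, if A ⊆ B, then for each representative net (B_ε) of B there exists a sharply bounded representative net (Ã_ε) of A with Ã_ε ⊆ B_ε for all ε ∈ (0,1). -/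
open Filter Topology Asymptotics

noncomputable section

namespace ColombeauPaper

variable {ι κ : Type*} {E : Type*} [AddCommGroup E] [Module ℝ E]
  {F : Type*} [AddCommGroup F] [Module ℝ F]

/-- A net `(u_ε)` in `E` is moderate for the family of seminorms `p` if for every `i`
there is `M ∈ ℕ` with `p i (u_ε) ≤ ε ^ (-M)` for all sufficiently small `ε > 0`. -/
def IsModerate (p : ι → Seminorm ℝ E) (u : ℝ → E) : Prop :=
  ∀ i, ∃ M : ℕ, ∀ᶠ ε in 𝓝[>] (0 : ℝ), p i (u ε) ≤ ε ^ (-(M : ℤ))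

/-- A net `(u_ε)` in `E` is negligible if for every `i` and every `m ∈ ℕ` one has
`p i (u_ε) ≤ ε ^ m` for all sufficiently small `ε > 0`. -/
def IsNegligible (p : ι → Seminorm ℝ E) (u : ℝ → E) : Prop :=
  ∀ i, ∀ m : ℕ, ∀ᶠ ε in 𝓝[>] (0 : ℝ), p i (u ε) ≤ ε ^ m

/-- A negligible net of real numbers. -/
def IsNegligibleR (n : ℝ → ℝ) : Prop :=
  ∀ m : ℕ, ∀ᶠ ε in 𝓝[>] (0 : ℝ), |n ε| ≤ ε ^ m

lemma small_mem : {ε : ℝ | 0 < ε ∧ ε ≤ 1 / 2} ∈ 𝓝[>] (0 : ℝ) := by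
  have h : Set.Ioo (0 : ℝ) (1 / 2) ∈ 𝓝[>] (0 : ℝ) :=
    Ioo_mem_nhdsGT_of_mem ⟨le_refl 0, by norm_num⟩
  filter_upwards [h] with ε hε
  exact ⟨hε.1, hε.2.le⟩

lemma zpow_neg_natCast_eq {ε : ℝ} (k : ℕ) : ε ^ (-(k : ℤ)) = ε⁻¹ ^ (k : ℤ) := by
  rw [zpow_neg, inv_zpow]

/-- The moderate nets form an additive subgroup of `(0,1) → E` (here modelled on `ℝ → E`,
with all conditions holding for sufficiently small `ε > 0`). -/
def moderateGroup (p : ι → Seminorm ℝ E) : AddSubgroup (ℝ → E) where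
  carrier := {u | IsModerate p u}
  zero_mem' := by
    intro i
    refine ⟨0, ?_⟩
    filter_upwards [self_mem_nhdsWithin] with ε hε
    have hε' : (0 : ℝ) < ε := hε
    simp only [Pi.zero_apply, map_zero]
    positivity
  add_mem' := by
    intro u v hu hv i
    obtain ⟨M, hM⟩ := hu i
    obtain ⟨N, hN⟩ := hv i
    refine ⟨max M N + 1, ?_⟩
    filter_upwards [hM, hN, small_mem] with ε h1 h2 h3
    obtain ⟨hε, hε2⟩ := h3
    have hinv : (1 : ℝ) ≤ ε⁻¹ := (one_le_inv₀ hε).2 (by linarith)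
    have h2inv : (2 : ℝ) ≤ ε⁻¹ := by
      nlinarith [mul_inv_cancel₀ (ne_of_gt hε)]
    have key : ∀ k l : ℕ, k ≤ l → ε ^ (-(k : ℤ)) ≤ ε ^ (-(l : ℤ)) := by
      intro k l hkl
      rw [zpow_neg_natCast_eq, zpow_neg_natCast_eq]
      exact zpow_le_zpow_right₀ hinv (by exact_mod_cast hkl)
    set K : ℕ := max M N with hK
    have h1' : p i (u ε) ≤ ε ^ (-(K : ℤ)) := h1.trans (key M K (le_max_left _ _))
    have h2' : p i (v ε) ≤ ε ^ (-(K : ℤ)) := h2.trans (key N K (le_max_right _ _))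
    have tri : p i ((u + v) ε) ≤ p i (u ε) + p i (v ε) := by
      simpa using map_add_le_add (p i) (u ε) (v ε)
    have efin : ε ^ (-(K : ℤ)) * 2 ≤ ε ^ (-((K + 1 : ℕ) : ℤ)) := by
      rw [zpow_neg_natCast_eq, zpow_neg_natCast_eq]
      push_cast
      have hnn : (0:ℝ) ≤ ε⁻¹ ^ (K : ℤ) := by positivity
      calc ε⁻¹ ^ (K : ℤ) * 2 ≤ ε⁻¹ ^ (K : ℤ) * ε⁻¹ :=
            mul_le_mul_of_nonneg_left h2inv hnn
        _ = ε⁻¹ ^ ((K : ℤ) + 1) := by rw [zpow_add₀ (by positivity : (ε⁻¹ : ℝ) ≠ 0), zpow_one]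
    push_cast at efin ⊢
    linarith
  neg_mem' := by
    intro u hu i
    obtain ⟨M, hM⟩ := hu i
    refine ⟨M, ?_⟩
    filter_upwards [hM] with ε h
    simpa [map_neg_eq_map] using h

/-- The negligible nets form an additive subgroup of the moderate ones. -/
def negligibleGroup (p : ι → Seminorm ℝ E) : AddSubgroup (moderateGroup p) where
  carrier := {u | IsNegligible p (u : ℝ → E)}
  zero_mem' := by
    intro i m
    filter_upwards [self_mem_nhdsWithin] with ε hε
    have hε' : (0 : ℝ) < ε := hε
    simp only [AddSubgroup.coe_zero, Pi.zero_apply, map_zero]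
    positivity
  add_mem' := by
    intro u v hu hv i m
    filter_upwards [hu i (m + 1), hv i (m + 1), small_mem] with ε h1 h2 h3
    obtain ⟨hε, hε2⟩ := h3
    have tri : p i (((u + v : moderateGroup p) : ℝ → E) ε)
        ≤ p i ((u : ℝ → E) ε) + p i ((v : ℝ → E) ε) := by
      simpa using map_add_le_add (p i) ((u : ℝ → E) ε) ((v : ℝ → E) ε)
    have hpow : ε ^ (m + 1) = ε ^ m * ε := pow_succ ε m
    nlinarith [pow_nonneg hε.le m]
  neg_mem' := by
    intro u hu i m
    filter_upwards [hu i m] with ε h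
    have : ((-u : moderateGroup p) : ℝ → E) ε = -((u : ℝ → E) ε) := rfl
    rw [this, map_neg_eq_map]
    exact h

/-- The Colombeau space based on `E` (with the family of seminorms `p`):
the quotient of the moderate nets by the negligible ones. -/
abbrev Colombeau (p : ι → Seminorm ℝ E) : Type _ :=
  moderateGroup p ⧸ negligibleGroup p

/-- The internal subset of `𝒢_E` generated by a net `(A_ε)` of subsets of `E`:
all `u` having a representative `(u_ε)` with `u_ε ∈ A_ε` for sufficiently small `ε`. -/
def internalSet (p : ι → Seminorm ℝ E) (A : ℝ → Set E) : Set (Colombeau p) :=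
  {u | ∃ w : moderateGroup p, (QuotientAddGroup.mk w : Colombeau p) = u ∧
        ∀ᶠ ε in 𝓝[>] (0 : ℝ), (w : ℝ → E) ε ∈ A ε}

/-- A subset of `𝒢_E` is internal if it is generated by some net of subsets of `E`. -/
def IsInternal (p : ι → Seminorm ℝ E) (A : Set (Colombeau p)) : Prop :=
  ∃ Anet : ℝ → Set E, A = internalSet p Anet

/-- `d_i(u, A) = inf_{v ∈ A} p_i (u - v)`, with value `+∞` for `A = ∅`. -/
def semiDist (p : ι → Seminorm ℝ E) (i : ι) (u : E) (A : Set E) : EReal :=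
  ⨅ v ∈ A, ((p i (u - v) : ℝ) : EReal)

/-- A sharply bounded net of subsets of `E`. -/
def SharplyBoundedNet (p : ι → Seminorm ℝ E) (A : ℝ → Set E) : Prop :=
  ∀ i, ∃ M : ℕ, ∀ᶠ ε in 𝓝[>] (0 : ℝ), ∀ w ∈ A ε, p i w ≤ ε ^ (-(M : ℤ))

/-- `p_i(u) ≤ α ^ t` in `ℝ̃` (where `α` is the class of `(ε)_ε`): some representative of the
net of seminorms is bounded by `ε ^ t` up to a negligible net for small `ε`. -/
def seminormLeAlpha (p : ι → Seminorm ℝ E) (i : ι) (u : Colombeau p) (t : ℝ) : Prop :=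
  ∃ (w : moderateGroup p) (n : ℝ → ℝ), (QuotientAddGroup.mk w : Colombeau p) = u ∧
    IsNegligibleR n ∧ ∀ᶠ ε in 𝓝[>] (0 : ℝ), p i ((w : ℝ → E) ε) ≤ ε ^ t + n ε

/-- The ultra-pseudo-seminorm `u ↦ |p_i(u)|_s = e^{-ν(p_i(u))}` on `𝒢_E`, where
`ν(x) = sup {b : |x_ε| = O(ε^b)}` is the valuation. -/
def sharpSemi (p : ι → Seminorm ℝ E) (i : ι) (u : Colombeau p) : ℝ :=
  sInf {r : ℝ | ∃ (b : ℝ) (w : moderateGroup p), (QuotientAddGroup.mk w : Colombeau p) = u ∧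
    r = Real.exp (-b) ∧ (fun ε => (p i ((w : ℝ → E) ε) : ℝ)) =O[𝓝[>] (0 : ℝ)] fun ε => ε ^ b}

/-- The sharp topology on `𝒢_E`: the topology generated by the ultra-pseudo-seminorms
`u ↦ |p_i(u)|_s`, i.e. generated by all the corresponding balls. -/
def sharpTopology (p : ι → Seminorm ℝ E) : TopologicalSpace (Colombeau p) :=
  TopologicalSpace.generateFrom
    {B | ∃ (u : Colombeau p) (i : ι) (r : ℝ), 0 < r ∧
          B = {v | sharpSemi p i (v - u) < r}}

lemma indicator_norm_le_one (S : Set ℝ) (ε : ℝ) :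
    ‖S.indicator (fun _ => (1 : ℝ)) ε‖ ≤ 1 := by
  by_cases h : ε ∈ S <;>
    simp [Set.indicator_of_mem, Set.indicator_of_notMem, h]

lemma eAux_le (p : ι → Seminorm ℝ E) (S : Set ℝ) (i : ι) (ε : ℝ) (x : E) :
    p i (S.indicator (fun _ => (1 : ℝ)) ε • x) ≤ p i x := by
  rw [map_smul_eq_mul]
  calc ‖S.indicator (fun _ => (1 : ℝ)) ε‖ * p i x ≤ 1 * p i x :=
        mul_le_mul_of_nonneg_right (indicator_norm_le_one S ε) (apply_nonneg _ _)
    _ = p i x := one_mul _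

/-- Multiplication by the characteristic function `χ_S`, on representatives. -/
def eAux (p : ι → Seminorm ℝ E) (S : Set ℝ) : moderateGroup p →+ moderateGroup p where
  toFun u := ⟨fun ε => S.indicator (fun _ => (1 : ℝ)) ε • (u : ℝ → E) ε, by
    have hu : IsModerate p (u : ℝ → E) := u.2
    intro i
    obtain ⟨M, hM⟩ := hu i
    refine ⟨M, ?_⟩
    filter_upwards [hM] with ε hε
    exact (eAux_le p S i ε _).trans hε⟩
  map_zero' := by
    apply Subtype.ext
    funext ε
    simp
  map_add' u v := by
    apply Subtype.ext
    funext ε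
    simp [smul_add]

/-- Multiplication by `e_S`, the class of the characteristic function of `S ⊆ (0,1)`,
as a map `𝒢_E → 𝒢_E`. -/
def eMul (p : ι → Seminorm ℝ E) (S : Set ℝ) : Colombeau p →+ Colombeau p :=
  QuotientAddGroup.map _ _ (eAux p S) (by
    intro u hu
    rw [AddSubgroup.mem_comap]
    have hu' : IsNegligible p (u : ℝ → E) := hu
    show IsNegligible p _
    intro i m
    filter_upwards [hu' i m] with ε hε
    exact (eAux_le p S i ε _).trans hε)

/-- The set of finite interleavings `∑_{j=1}^m e_{S_j} a_j` of elements of `A`,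
over partitions `{S_1, …, S_m}` of `(0,1)`. -/
def interleaving (p : ι → Seminorm ℝ E) (A : Set (Colombeau p)) : Set (Colombeau p) :=
  {u | ∃ (m : ℕ) (S : Fin m → Set ℝ) (a : Fin m → Colombeau p),
        (∀ j, a j ∈ A) ∧ (∀ j, S j ⊆ Set.Ioo 0 1) ∧
        (Pairwise fun j k => Disjoint (S j) (S k)) ∧ (⋃ j, S j) = Set.Ioo 0 1 ∧
        u = ∑ j, eMul p (S j) (a j)}

/-- The family of seminorms `max (p_i, q_j)` generating the product topology on `E × F`. -/
def prodSeminorm (p : ι → Seminorm ℝ E) (q : κ → Seminorm ℝ F) :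
    ι × κ → Seminorm ℝ (E × F) :=
  fun ij => (p ij.1).comp (LinearMap.fst ℝ E F) ⊔ (q ij.2).comp (LinearMap.snd ℝ E F)

lemma prodSeminorm_apply (p : ι → Seminorm ℝ E) (q : κ → Seminorm ℝ F) (i : ι) (j : κ)
    (x : E × F) : prodSeminorm p q (i, j) x = max (p i x.1) (q j x.2) := by
  simp [prodSeminorm, Seminorm.sup_apply, Seminorm.comp_apply]

/-- First component of a moderate net in `E × F`, as a moderate net in `E`. -/
def prodFstAux [Nonempty κ] (p : ι → Seminorm ℝ E) (q : κ → Seminorm ℝ F) :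
    moderateGroup (prodSeminorm p q) →+ moderateGroup p where
  toFun w := ⟨fun ε => ((w : ℝ → E × F) ε).1, by
    have hw : IsModerate (prodSeminorm p q) (w : ℝ → E × F) := w.2
    intro i
    obtain ⟨j⟩ := ‹Nonempty κ›
    obtain ⟨M, hM⟩ := hw (i, j)
    refine ⟨M, ?_⟩
    filter_upwards [hM] with ε hε
    calc p i (((w : ℝ → E × F) ε).1) ≤ prodSeminorm p q (i, j) ((w : ℝ → E × F) ε) := by
          rw [prodSeminorm_apply]; exact le_max_left _ _
      _ ≤ ε ^ (-(M : ℤ)) := hε⟩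
  map_zero' := by apply Subtype.ext; funext ε; simp
  map_add' u v := by apply Subtype.ext; funext ε; simp

/-- Second component of a moderate net in `E × F`, as a moderate net in `F`. -/
def prodSndAux [Nonempty ι] (p : ι → Seminorm ℝ E) (q : κ → Seminorm ℝ F) :
    moderateGroup (prodSeminorm p q) →+ moderateGroup q where
  toFun w := ⟨fun ε => ((w : ℝ → E × F) ε).2, by
    have hw : IsModerate (prodSeminorm p q) (w : ℝ → E × F) := w.2
    intro j
    obtain ⟨i⟩ := ‹Nonempty ι›
    obtain ⟨M, hM⟩ := hw (i, j)
    refine ⟨M, ?_⟩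
    filter_upwards [hM] with ε hε
    calc q j (((w : ℝ → E × F) ε).2) ≤ prodSeminorm p q (i, j) ((w : ℝ → E × F) ε) := by
          rw [prodSeminorm_apply]; exact le_max_right _ _
      _ ≤ ε ^ (-(M : ℤ)) := hε⟩
  map_zero' := by apply Subtype.ext; funext ε; simp
  map_add' u v := by apply Subtype.ext; funext ε; simp

/-- The canonical identification `𝒢_{E × F} ≅ 𝒢_E × 𝒢_F` (given on representatives by
`[(u_ε, v_ε)] ↦ ([(u_ε)], [(v_ε)])`). -/
def prodIdent [Nonempty ι] [Nonempty κ] (p : ι → Seminorm ℝ E) (q : κ → Seminorm ℝ F) :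
    Colombeau (prodSeminorm p q) →+ Colombeau p × Colombeau q :=
  QuotientAddGroup.lift (negligibleGroup (prodSeminorm p q))
    (((QuotientAddGroup.mk' (negligibleGroup p)).comp (prodFstAux p q)).prod
      ((QuotientAddGroup.mk' (negligibleGroup q)).comp (prodSndAux p q)))
    (by
      intro w hw
      have hw' : IsNegligible (prodSeminorm p q) (w : ℝ → E × F) := hw
      rw [AddMonoidHom.mem_ker]
      refine Prod.ext ?_ ?_
      · show (QuotientAddGroup.mk' (negligibleGroup p)) (prodFstAux p q w) = 0
        rw [QuotientAddGroup.mk'_apply, QuotientAddGroup.eq_zero_iff]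
        show IsNegligible p _
        intro i m
        obtain ⟨j⟩ := ‹Nonempty κ›
        filter_upwards [hw' (i, j) m] with ε hε
        calc p i (((w : ℝ → E × F) ε).1)
            ≤ prodSeminorm p q (i, j) ((w : ℝ → E × F) ε) := by
              rw [prodSeminorm_apply]; exact le_max_left _ _
          _ ≤ ε ^ m := hε
      · show (QuotientAddGroup.mk' (negligibleGroup q)) (prodSndAux p q w) = 0
        rw [QuotientAddGroup.mk'_apply, QuotientAddGroup.eq_zero_iff]
        show IsNegligible q _
        intro j m
        obtain ⟨i⟩ := ‹Nonempty ι›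
        filter_upwards [hw' (i, j) m] with ε hε
        calc q j (((w : ℝ → E × F) ε).2)
            ≤ prodSeminorm p q (i, j) ((w : ℝ → E × F) ε) := by
              rw [prodSeminorm_apply]; exact le_max_right _ _
          _ ≤ ε ^ m := hε)

/-- A subset of `𝒢_E × 𝒢_F` is internal if, under the canonical identification
`𝒢_{E×F} ≅ 𝒢_E × 𝒢_F`, it corresponds to an internal subset of `𝒢_{E×F}`. -/
def IsInternalProd [Nonempty ι] [Nonempty κ] (p : ι → Seminorm ℝ E) (q : κ → Seminorm ℝ F)
    (C : Set (Colombeau p × Colombeau q)) : Prop :=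
  ∃ Cnet : ℝ → Set (E × F),
    C = prodIdent p q '' internalSet (prodSeminorm p q) Cnet

section Normed

variable (V : Type*) [NormedAddCommGroup V] [NormedSpace ℝ V]

/-- The norm of a normed space, as a one-element family of seminorms. -/
abbrev normFamily : Unit → Seminorm ℝ V := fun _ => normSeminorm ℝ V

/-- The Colombeau space based on a normed space `V`. -/
abbrev GN := Colombeau (normFamily V)

variable {V}

/-- `‖u‖ ≤ α ^ t` in `ℝ̃`, where `α` is the class of `(ε)_ε`. -/
def normLeAlpha (u : GN V) (t : ℝ) : Prop :=
  ∃ (w : moderateGroup (normFamily V)) (n : ℝ → ℝ),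
    (QuotientAddGroup.mk w : GN V) = u ∧ IsNegligibleR n ∧
    ∀ᶠ ε in 𝓝[>] (0 : ℝ), ‖(w : ℝ → V) ε‖ ≤ ε ^ t + n ε

/-- `‖u‖ ≤ ‖v‖` in `ℝ̃`. -/
def normLeNorm (u v : GN V) : Prop :=
  ∃ (a b : moderateGroup (normFamily V)) (n : ℝ → ℝ),
    (QuotientAddGroup.mk a : GN V) = u ∧ (QuotientAddGroup.mk b : GN V) = v ∧
    IsNegligibleR n ∧
    ∀ᶠ ε in 𝓝[>] (0 : ℝ), ‖(a : ℝ → V) ε‖ ≤ ‖(b : ℝ → V) ε‖ + n ε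

/-- A subset `A ⊆ 𝒢_V` is sharply bounded if `‖u‖ ≤ α^{-M}` for some `M ∈ ℕ` and all `u ∈ A`. -/
def SharplyBounded (A : Set (GN V)) : Prop :=
  ∃ M : ℕ, ∀ u ∈ A, normLeAlpha u (-(M : ℝ))

/-- A sharply bounded net of subsets of the normed space `V`. -/
def SharplyBoundedNetN (A : ℝ → Set V) : Prop :=
  ∃ M : ℕ, ∀ᶠ ε in 𝓝[>] (0 : ℝ), ∀ w ∈ A ε, ‖w‖ ≤ ε ^ (-(M : ℤ))

end Normed

/-!
A point `[w]` lies in `[(C_ε)]` as soon as `d_n(w_ε, C_ε)` is negligible for every `n`: a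
diagonal index `K(ε) → ∞` with `d_{K(ε)}(w_ε, C_ε) < ε ^ K(ε)` lets us pick `v_ε ∈ C_ε` with
`p_{K(ε)}(w_ε - v_ε) < ε ^ K(ε)`, and since `(p_n)` is increasing, `w - v` is negligible.
Conversely, if `A ⊆ B`, test the inclusion on a net `u_ε ∈ A_ε` that is `ε ^ m`-far from `B_ε`
whenever some point of `A_ε` is; it is moderate because `(A_ε)` is sharply bounded.
For the last claim, `Ã_ε` consists of the points of `B_ε` that are `ε ^ K(ε)`-close to `A_ε`
in `p_{K(ε)}`.
-/

theorem exists_tendsto_atTop_eventually_of_forall {α : Type*} {l : Filter α} {N : α → ℕ}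
    (hN : Tendsto N l atTop) {P : ℕ → α → Prop} (hP : ∀ k, ∀ᶠ a in l, P k a) :
    ∃ K : α → ℕ, Tendsto K l atTop ∧ ∀ᶠ a in l, P (K a) a := by
  classical
  refine ⟨fun a => Nat.findGreatest (P · a) (N a), tendsto_atTop.2 fun k => ?_, ?_⟩
  · filter_upwards [hN.eventually_ge_atTop k, hP k] with a hk hPk
    exact Nat.le_findGreatest hk hPk
  · filter_upwards [hP 0] with a hP0
    exact Nat.findGreatest_spec (P := (P · a)) (Nat.zero_le _) hP0

theorem tendsto_natFloor_inv_nhdsGT_zero :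
    Tendsto (fun ε : ℝ => ⌊ε⁻¹⌋₊) (𝓝[>] 0) atTop :=
  tendsto_nat_floor_atTop.comp tendsto_inv_nhdsGT_zero

theorem eventually_mem_Ioo_zero_one : ∀ᶠ ε in 𝓝[>] (0 : ℝ), ε ∈ Set.Ioo 0 1 :=
  Ioo_mem_nhdsGT one_pos

theorem exists_tendsto_atTop_eventually_lt_pow {f : ℕ → ℝ → EReal}
    (hf : ∀ n m : ℕ, ∀ᶠ ε in 𝓝[>] (0 : ℝ), f n ε ≤ ((ε ^ m : ℝ) : EReal)) :
    ∃ K : ℝ → ℕ, Tendsto K (𝓝[>] 0) atTop ∧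
      ∀ᶠ ε in 𝓝[>] (0 : ℝ), f (K ε) ε < ((ε ^ K ε : ℝ) : EReal) :=
  exists_tendsto_atTop_eventually_of_forall tendsto_natFloor_inv_nhdsGT_zero fun k => by
    filter_upwards [hf k (k + 1), eventually_mem_Ioo_zero_one] with ε hk hε
    exact hk.trans_lt <| EReal.coe_lt_coe_iff.2 <|
      pow_lt_pow_right_of_lt_one₀ hε.1 hε.2 k.lt_succ_self

theorem zpow_neg_add_one_le {ε : ℝ} (hε : 0 < ε) (hε2 : ε ≤ 1 / 2) (M : ℕ) :
    ε ^ (-(M : ℤ)) + 1 ≤ ε ^ (-((M + 1 : ℕ) : ℤ)) := by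
  have hone : 1 ≤ ε ^ (-(M : ℤ)) := by
    rw [zpow_neg, zpow_natCast]
    exact one_le_inv₀ (pow_pos hε M) |>.2 (pow_le_one₀ hε.le (by linarith))
  have htwo : 2 ≤ ε⁻¹ := by
    rw [le_inv_comm₀ two_pos hε]; linarith
  rw [Nat.cast_succ, neg_add, ← sub_eq_add_neg, zpow_sub_one₀ hε.ne']
  nlinarith

variable {p : ι → Seminorm ℝ E}

theorem semiDist_le_of_mem {i : ι} {u v : E} {B : Set E} (hv : v ∈ B) :
    semiDist p i u B ≤ ((p i (u - v) : ℝ) : EReal) :=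
  iInf₂_le v hv

theorem exists_mem_lt_of_semiDist_lt {i : ι} {u : E} {B : Set E} {c : ℝ}
    (h : semiDist p i u B < (c : EReal)) : ∃ v ∈ B, p i (u - v) < c := by
  simp only [semiDist, iInf_lt_iff, exists_prop, EReal.coe_lt_coe_iff] at h
  exact h

theorem IsNegligible.isModerate {u : ℝ → E} (h : IsNegligible p u) : IsModerate p u :=
  fun i => ⟨0, by simpa using h i 0⟩

theorem mk_eq_mk_iff_isNegligible {w v : moderateGroup p} :
    (QuotientAddGroup.mk w : Colombeau p) = QuotientAddGroup.mk v ↔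
      IsNegligible p fun ε => (v : ℝ → E) ε - (w : ℝ → E) ε := by
  rw [QuotientAddGroup.eq]
  show IsNegligible p (fun ε => -(w : ℝ → E) ε + (v : ℝ → E) ε) ↔ _
  simp only [neg_add_eq_sub]

theorem SharplyBoundedNet.isModerate_of_eventually_mem {A : ℝ → Set E}
    (hA : SharplyBoundedNet p A) {u : ℝ → E} (hu : ∀ᶠ ε in 𝓝[>] (0 : ℝ), u ε ∈ A ε) :
    IsModerate p u := fun i =>
  let ⟨M, hM⟩ := hA i
  ⟨M, by filter_upwards [hM, hu] with ε hMε huε using hMε _ huε⟩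

theorem SharplyBoundedNet.of_eventually_near {A A' : ℝ → Set E} (hA : SharplyBoundedNet p A)
    (h : ∀ i, ∀ᶠ ε in 𝓝[>] (0 : ℝ), ∀ v ∈ A' ε, ∃ x ∈ A ε, p i (v - x) ≤ 1) :
    SharplyBoundedNet p A' := fun i => by
  obtain ⟨M, hM⟩ := hA i
  refine ⟨M + 1, ?_⟩
  filter_upwards [hM, h i, Ioc_mem_nhdsGT (by norm_num : (0 : ℝ) < 1 / 2)] with ε hMε hε hε2
  intro v hv
  obtain ⟨x, hxA, hvx⟩ := hε v hv
  calc p i v = p i (x + (v - x)) := by rw [add_sub_cancel]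
    _ ≤ p i x + p i (v - x) := map_add_le_add _ _ _
    _ ≤ ε ^ (-(M : ℤ)) + 1 := add_le_add (hMε x hxA) hvx
    _ ≤ ε ^ (-((M + 1 : ℕ) : ℤ)) := zpow_neg_add_one_le hε2.1 hε2.2 M

theorem mk_mem_internalSet_of_isNegligible_sub {C : ℝ → Set E} (w : moderateGroup p)
    {v : ℝ → E} (hv : ∀ᶠ ε in 𝓝[>] (0 : ℝ), v ε ∈ C ε)
    (h : IsNegligible p fun ε => (w : ℝ → E) ε - v ε) :
    (QuotientAddGroup.mk w : Colombeau p) ∈ internalSet p C := by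
  have hvmod : v ∈ moderateGroup p := by
    have hv_eq : v = (w : ℝ → E) - fun ε => (w : ℝ → E) ε - v ε := by
      funext ε; simp
    rw [hv_eq]
    exact sub_mem w.2 h.isModerate
  exact ⟨⟨v, hvmod⟩, mk_eq_mk_iff_isNegligible.2 h, hv⟩

theorem semiDist_le_pow_of_mk_mem {C : ℝ → Set E} {w : moderateGroup p}
    (h : (QuotientAddGroup.mk w : Colombeau p) ∈ internalSet p C) (i : ι) (m : ℕ) :
    ∀ᶠ ε in 𝓝[>] (0 : ℝ), semiDist p i ((w : ℝ → E) ε) (C ε) ≤ ((ε ^ m : ℝ) : EReal) := by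
  obtain ⟨v, hvw, hvC⟩ := h
  filter_upwards [hvC, mk_eq_mk_iff_isNegligible.1 hvw i m] with ε hvε hε
  exact (semiDist_le_of_mem hvε).trans (EReal.coe_le_coe_iff.2 hε)

theorem isNegligible_of_tendsto_atTop {p : ℕ → Seminorm ℝ E} (hp : Monotone p) {u : ℝ → E}
    {K : ℝ → ℕ} (hK : Tendsto K (𝓝[>] 0) atTop)
    (h : ∀ᶠ ε in 𝓝[>] (0 : ℝ), p (K ε) (u ε) ≤ ε ^ K ε) : IsNegligible p u := fun i m => by
  filter_upwards [h, hK.eventually_ge_atTop i, hK.eventually_ge_atTop m,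
    eventually_mem_Ioo_zero_one] with ε hε hi hm hε01
  calc p i (u ε) ≤ p (K ε) (u ε) := hp hi _
    _ ≤ ε ^ K ε := hε
    _ ≤ ε ^ m := pow_le_pow_of_le_one hε01.1.le hε01.2.le hm

theorem mk_mem_internalSet_of_tendsto_atTop {p : ℕ → Seminorm ℝ E} (hp : Monotone p)
    {C : ℝ → Set E} (w : moderateGroup p) {K : ℝ → ℕ} (hK : Tendsto K (𝓝[>] 0) atTop)
    (h : ∀ᶠ ε in 𝓝[>] (0 : ℝ),
      semiDist p (K ε) ((w : ℝ → E) ε) (C ε) < ((ε ^ K ε : ℝ) : EReal)) :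
    (QuotientAddGroup.mk w : Colombeau p) ∈ internalSet p C := by
  obtain ⟨v, hv⟩ := (h.mono fun ε hε => exists_mem_lt_of_semiDist_lt hε).choice
  exact mk_mem_internalSet_of_isNegligible_sub w (hv.mono fun ε hε => hε.1)
    (isNegligible_of_tendsto_atTop hp hK (hv.mono fun ε hε => hε.2.le))

theorem iSup_semiDist_le_pow_of_subset {A B : ℝ → Set E} (hA : SharplyBoundedNet p A)
    (hAne : (internalSet p A).Nonempty) (hAB : internalSet p A ⊆ internalSet p B)
    (i : ι) (m : ℕ) :
    ∀ᶠ ε in 𝓝[>] (0 : ℝ), (⨆ u ∈ A ε, semiDist p i u (B ε)) ≤ ((ε ^ m : ℝ) : EReal) := by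
  obtain ⟨-, a, -, ha⟩ := hAne
  have hfar : ∀ᶠ ε in 𝓝[>] (0 : ℝ), ∃ x, x ∈ A ε ∧
      ((∃ y ∈ A ε, ((ε ^ m : ℝ) : EReal) < semiDist p i y (B ε)) →
        ((ε ^ m : ℝ) : EReal) < semiDist p i x (B ε)) := by
    filter_upwards [ha] with ε haε
    by_cases hy : ∃ y ∈ A ε, ((ε ^ m : ℝ) : EReal) < semiDist p i y (B ε)
    · obtain ⟨y, hyA, hy'⟩ := hy
      exact ⟨y, hyA, fun _ => hy'⟩
    · exact ⟨_, haε, fun h => absurd h hy⟩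
  obtain ⟨u, hu⟩ := hfar.choice
  let U : moderateGroup p := ⟨u, hA.isModerate_of_eventually_mem (hu.mono fun ε hε => hε.1)⟩
  have hUB := semiDist_le_pow_of_mk_mem (hAB ⟨U, rfl, hu.mono fun ε hε => hε.1⟩) i m
  filter_upwards [hu, hUB] with ε huε hUε
  refine iSup₂_le fun y hyA => not_lt.1 fun hy => ?_
  exact (huε.2 ⟨y, hyA, hy⟩).not_ge hUε

theorem internalSet_subset_of_iSup_semiDist_le_pow {p : ℕ → Seminorm ℝ E} (hp : Monotone p)
    {A B : ℝ → Set E}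
    (h : ∀ n m : ℕ, ∀ᶠ ε in 𝓝[>] (0 : ℝ),
      (⨆ u ∈ A ε, semiDist p n u (B ε)) ≤ ((ε ^ m : ℝ) : EReal)) :
    internalSet p A ⊆ internalSet p B := by
  rintro _ ⟨w, rfl, hw⟩
  obtain ⟨K, hK, hKw⟩ := exists_tendsto_atTop_eventually_lt_pow
    (f := fun n ε => semiDist p n ((w : ℝ → E) ε) (B ε)) fun n m => by
      filter_upwards [hw, h n m] with ε hwε hε
      exact (le_iSup₂ (f := fun u (_ : u ∈ A ε) => semiDist p n u (B ε)) _ hwε).trans hε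
  exact mk_mem_internalSet_of_tendsto_atTop hp w hK hKw

theorem exists_sharplyBoundedNet_subset {p : ℕ → Seminorm ℝ E} (hp : Monotone p)
    {A B : ℝ → Set E} (hA : SharplyBoundedNet p A)
    (h : ∀ n m : ℕ, ∀ᶠ ε in 𝓝[>] (0 : ℝ),
      (⨆ u ∈ A ε, semiDist p n u (B ε)) ≤ ((ε ^ m : ℝ) : EReal)) :
    ∃ A' : ℝ → Set E, SharplyBoundedNet p A' ∧ internalSet p A' = internalSet p A ∧
      ∀ ε, A' ε ⊆ B ε := by
  obtain ⟨K, hK, hKd⟩ := exists_tendsto_atTop_eventually_lt_pow h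
  refine ⟨fun ε => {v ∈ B ε | ∃ x ∈ A ε, p (K ε) (x - v) < ε ^ K ε},
    hA.of_eventually_near fun i => ?_, subset_antisymm ?_ ?_, fun ε v hv => hv.1⟩
  · filter_upwards [hK.eventually_ge_atTop i, eventually_mem_Ioo_zero_one] with ε hi hε
    rintro v ⟨-, x, hxA, hxv⟩
    refine ⟨x, hxA, ?_⟩
    calc p i (v - x) = p i (x - v) := map_sub_rev _ _ _
      _ ≤ p (K ε) (x - v) := hp hi _
      _ ≤ 1 := hxv.le.trans (pow_le_one₀ hε.1.le hε.2.le)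
  · rintro _ ⟨v, rfl, hv⟩
    refine mk_mem_internalSet_of_tendsto_atTop hp v hK ?_
    filter_upwards [hv] with ε hvε
    obtain ⟨-, x, hxA, hxv⟩ := hvε
    rw [← map_sub_rev] at hxv
    exact (semiDist_le_of_mem hxA).trans_lt (EReal.coe_lt_coe_iff.2 hxv)
  · rintro _ ⟨w, rfl, hw⟩
    refine mk_mem_internalSet_of_tendsto_atTop hp w hK ?_
    filter_upwards [hw, hKd] with ε hwε hε
    obtain ⟨y, hyB, hy⟩ := exists_mem_lt_of_semiDist_lt <|
      (le_iSup₂ (f := fun u (_ : u ∈ A ε) => semiDist p (K ε) u (B ε)) _ hwε).trans_lt hε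
    exact (semiDist_le_of_mem (B := {v ∈ B ε | ∃ x ∈ A ε, p (K ε) (x - v) < ε ^ K ε})
      ⟨hyB, _, hwε, hy⟩).trans_lt (EReal.coe_lt_coe_iff.2 hy)

/-- **Inclusions of internal sets.** With `(p_n)` increasing, `A` internal,
non-empty, with sharply bounded representative `(A_ε)`, and `B = [(B_ε)]` internal:
`A ⊆ B` iff the nets `(sup_{u ∈ A_ε} d_n(u, B_ε))_ε` are negligible for all `n`; moreover,
if `A ⊆ B` there is a sharply bounded representative `(Ã_ε)` of `A` with `Ã_ε ⊆ B_ε`. -/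
theorem inclusion_characterization
    {E : Type*} [AddCommGroup E] [Module ℝ E]
    (p : ℕ → Seminorm ℝ E) (hp : Monotone p)
    (Anet Bnet : ℝ → Set E) (hAb : SharplyBoundedNet p Anet)
    (hAne : (internalSet p Anet).Nonempty) :
    (internalSet p Anet ⊆ internalSet p Bnet ↔
      ∀ n m : ℕ, ∀ᶠ ε in 𝓝[>] (0 : ℝ),
        (⨆ u ∈ Anet ε, semiDist p n u (Bnet ε)) ≤ ((ε ^ m : ℝ) : EReal)) ∧
    (internalSet p Anet ⊆ internalSet p Bnet →
      ∃ Atilde : ℝ → Set E, SharplyBoundedNet p Atilde ∧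
        internalSet p Atilde = internalSet p Anet ∧
        ∀ ε ∈ Set.Ioo (0 : ℝ) 1, Atilde ε ⊆ Bnet ε) := by
  have hforward := iSup_semiDist_le_pow_of_subset hAb hAne (B := Bnet)
  refine ⟨⟨hforward, internalSet_subset_of_iSup_semiDist_le_pow hp⟩, fun hAB => ?_⟩
  obtain ⟨A', hA'b, hA'A, hA'B⟩ := exists_sharplyBoundedNet_subset hp hAb (hforward hAB)
  exact ⟨A', hA'b, hA'A, fun ε _ => hA'B ε⟩

end ColombeauPaper
end
end

section
/- (Saturation) Suppose the topology of E is generated by an increasing sequence of seminorms (p_n)_{n∈ℕ}. Let (A_n)_{n∈ℕ} be a decreasing chain A_1 ⊇ A_2 ⊇ ⋯ of non-empty internal subsets of G_E, and suppose there is a sequence of positive real numbers (t_n)_{n∈ℕ} such that p_n(v) ≤ α^{−t_n} for all v ∈ A_n and all n ∈ ℕ. Then ⋂_{n∈ℕ} A_n ≠ ∅. -/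
open Filter Topology Asymptotics

noncomputable section

namespace ColombeauPaper

variable {ι κ : Type*} {E : Type*} [AddCommGroup E] [Module ℝ E]
  {F : Type*} [AddCommGroup F] [Module ℝ F]

/-!
Pick `u n ∈ A n` and, for each `k ≤ n`, a representative of `u n` lying in the `k`-th defining
net of `A k`. For fixed `n` only finitely many conditions are involved, so for all small `ε` the
representatives at level `n` lie in their nets, satisfy `p i ≤ ε ^ (-t i) + 2` for `i ≤ n`, and
agree with each other up to `ε ^ n`. A diagonal level function `L ε → ∞` with level `L ε`
valid at `ε` glues these into nets that are moderate, negligibly close to one another and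
eventually in every net; their common class lies in every `A k`.
-/

theorem _root_.Filter.exists_tendsto_atTop_eventually_diag {α : Type*} {l : Filter α}
    [l.IsCountablyGenerated] (hl : l.ker = ∅) {P : ℕ → α → Prop}
    (hP : ∀ n, ∀ᶠ x in l, P n x) :
    ∃ L : α → ℕ, Tendsto L l atTop ∧ ∀ᶠ x in l, P (L x) x := by
  classical
  obtain ⟨b, hb⟩ := l.exists_antitone_basis
  have hb_empty : ⋂ n, b n = ∅ := by rw [← hl, hb.toHasBasis.ker]; simp
  let s : ℕ → Set α := fun n => b n ∩ {x | ∀ k ≤ n, P k x}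
  have hs_anti : Antitone s := fun m n hmn x hx =>
    ⟨hb.antitone hmn hx.1, fun k hk => hx.2 k (hk.trans hmn)⟩
  have hs_mem : ∀ n, s n ∈ l := fun n =>
    inter_mem (hb.mem n) ((eventually_all_finite (Set.finite_Iic n)).2 fun k _ => hP k)
  have hs_empty : ∀ x, ∃ n, x ∉ s n := by
    intro x
    obtain ⟨n, hn⟩ : ∃ n, x ∉ b n := by
      simpa using Set.eq_empty_iff_forall_notMem.1 hb_empty x
    exact ⟨n, fun h => hn h.1⟩
  have hs_of_lt : ∀ x n, n < Nat.find (hs_empty x) → x ∈ s n := fun x n hn =>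
    not_not.1 (Nat.find_min _ hn)
  -- `L x` is the last level `n` with `x ∈ s n`; it exists because `⋂ n, b n = ∅`.
  refine ⟨fun x => Nat.find (hs_empty x) - 1, tendsto_atTop.2 fun k => ?_, ?_⟩
  · filter_upwards [hs_mem (k + 1)] with x hx
    have : k + 1 < Nat.find (hs_empty x) := by
      by_contra! h
      exact Nat.find_spec (hs_empty x) (hs_anti h hx)
    omega
  · filter_upwards [hs_mem 0] with x hx
    have hpos : 0 < Nat.find (hs_empty x) := Nat.pos_of_ne_zero fun h =>
      Nat.find_spec (hs_empty x) (h ▸ hx)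
    exact (hs_of_lt x _ (by omega)).2 _ le_rfl

theorem _root_.Filter.ker_nhdsGT {α : Type*} [TopologicalSpace α] [T1Space α] [Preorder α]
    (a : α) : (𝓝[>] a).ker = ∅ := by
  simp [nhdsWithin, ker_nhds]

theorem exists_eventually_rpow_add_le_zpow_neg (a c : ℝ) :
    ∃ M : ℕ, ∀ᶠ ε in 𝓝[>] (0 : ℝ), ε ^ a + c ≤ ε ^ (-(M : ℤ)) := by
  obtain ⟨M, hM⟩ := exists_nat_gt (max (-a) 0)
  have ha : 0 < a + M := by linarith [le_max_left (-a) 0]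
  have hM0 : M ≠ 0 := by rintro rfl; simp at hM
  have hlim : Tendsto (fun ε : ℝ => ε ^ (a + M) + c * ε ^ M) (𝓝 0) (𝓝 0) := by
    have h1 := (Real.continuousAt_rpow_const 0 (a + M) (Or.inr ha.le)).tendsto
    have h2 : Tendsto (fun ε : ℝ => c * ε ^ M) (𝓝 0) (𝓝 (c * 0 ^ M)) :=
      ((continuous_pow M).const_mul c).tendsto 0
    simpa [Real.zero_rpow ha.ne', hM0] using h1.add h2
  refine ⟨M, ?_⟩
  filter_upwards [nhdsWithin_le_nhds (hlim.eventually (gt_mem_nhds one_pos)),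
    self_mem_nhdsWithin] with ε hlt (hε : 0 < ε)
  rw [Real.rpow_add hε, Real.rpow_natCast, ← add_mul] at hlt
  rw [zpow_neg, zpow_natCast, ← one_div, le_div_iff₀ (by positivity)]
  exact hlt.le

section Representatives

variable {p : ι → Seminorm ℝ E}

theorem isNegligible_sub_of_mk_eq {w z : moderateGroup p}
    (h : (QuotientAddGroup.mk w : Colombeau p) = QuotientAddGroup.mk z) :
    IsNegligible p ((w : ℝ → E) - z) :=
  QuotientAddGroup.eq_iff_sub_mem.1 h

theorem seminormLeAlpha.eventually_le {i : ι} {w : moderateGroup p} {a : ℝ}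
    (h : seminormLeAlpha p i (QuotientAddGroup.mk w) a) :
    ∀ᶠ ε in 𝓝[>] (0 : ℝ), p i ((w : ℝ → E) ε) ≤ ε ^ a + 2 := by
  obtain ⟨z, n, hz, hn, hle⟩ := h
  filter_upwards [hle, hn 0, isNegligible_sub_of_mk_eq hz.symm i 0] with ε hz_le hn_le hwz
  have hn1 : n ε ≤ 1 := (le_abs_self _).trans (by simpa using hn_le)
  have hwz1 : p i ((w : ℝ → E) ε - (z : ℝ → E) ε) ≤ 1 := by simpa using hwz
  have := le_map_add_map_sub (p i) ((w : ℝ → E) ε) ((z : ℝ → E) ε)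
  linarith

end Representatives

section Diagonal

variable {p : ℕ → Seminorm ℝ E}

theorem isModerate_of_eventually_forall_le {v : ℝ → E} {L : ℝ → ℕ}
    (hL : Tendsto L (𝓝[>] 0) atTop) (a : ℕ → ℝ) (c : ℝ)
    (hv : ∀ᶠ ε in 𝓝[>] (0 : ℝ), ∀ i ≤ L ε, p i (v ε) ≤ ε ^ a i + c) : IsModerate p v := by
  intro i
  obtain ⟨M, hM⟩ := exists_eventually_rpow_add_le_zpow_neg (a i) c
  refine ⟨M, ?_⟩
  filter_upwards [hv, hL.eventually_ge_atTop i, hM] with ε hvε hi hMε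
  exact (hvε i hi).trans hMε

theorem isNegligible_of_eventually_forall_le {v : ℝ → E} {L : ℝ → ℕ}
    (hL : Tendsto L (𝓝[>] 0) atTop)
    (hv : ∀ᶠ ε in 𝓝[>] (0 : ℝ), ∀ i ≤ L ε, p i (v ε) ≤ ε ^ L ε) : IsNegligible p v := by
  intro i m
  filter_upwards [hv, hL.eventually_ge_atTop (max i m), Ioo_mem_nhdsGT one_pos]
    with ε hvε hLε hε
  exact (hvε i (le_of_max_le_left hLε)).trans
    (pow_le_pow_of_le_one hε.1.le hε.2.le (le_of_max_le_right hLε))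

theorem nonempty_iInter_internalSet {Anet : ℕ → ℝ → Set E} {a : ℕ → ℝ}
    (u : ℕ → Colombeau p) (hu : ∀ n, ∀ k ≤ n, u n ∈ internalSet p (Anet k))
    (hbd : ∀ n, ∀ i ≤ n, seminormLeAlpha p i (u n) (a i)) :
    (⋂ k, internalSet p (Anet k)).Nonempty := by
  have hrep : ∀ n k, ∃ w : moderateGroup p, QuotientAddGroup.mk w = u n ∧
      (k ≤ n → ∀ᶠ ε in 𝓝[>] (0 : ℝ), (w : ℝ → E) ε ∈ Anet k ε) := by
    intro n k
    by_cases hk : k ≤ n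
    · obtain ⟨w, hw, hmem⟩ := hu n k hk
      exact ⟨w, hw, fun _ => hmem⟩
    · obtain ⟨w, hw⟩ := QuotientAddGroup.mk_surjective (u n)
      exact ⟨w, hw, fun h => absurd h hk⟩
  choose w hw_mk hw_mem using hrep
  have hlevel : ∀ n, ∀ᶠ ε in 𝓝[>] (0 : ℝ), ∀ k ≤ n, ∀ i ≤ n,
      (w n k : ℝ → E) ε ∈ Anet k ε ∧ p i ((w n k : ℝ → E) ε) ≤ ε ^ a i + 2 ∧
      p i ((w n k : ℝ → E) ε - (w n 0 : ℝ → E) ε) ≤ ε ^ n := by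
    intro n
    refine (eventually_all_finite (Set.finite_Iic n)).2 fun k hk =>
      (eventually_all_finite (Set.finite_Iic n)).2 fun i hi => ?_
    have hbd' : seminormLeAlpha p i (QuotientAddGroup.mk (w n k)) (a i) :=
      (hw_mk n k).symm ▸ hbd n i hi
    filter_upwards [hw_mem n k hk, hbd'.eventually_le,
      isNegligible_sub_of_mk_eq ((hw_mk n k).trans (hw_mk n 0).symm) i n] with ε h1 h2 h3
    exact ⟨h1, h2, h3⟩
  obtain ⟨L, hL, hL_level⟩ := exists_tendsto_atTop_eventually_diag (ker_nhdsGT 0) hlevel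
  have hmod : ∀ k, IsModerate p fun ε => (w (L ε) k : ℝ → E) ε := fun k =>
    isModerate_of_eventually_forall_le hL a 2 <| by
      filter_upwards [hL_level, hL.eventually_ge_atTop k] with ε h hk i hi
      exact (h k hk i hi).2.1
  let g : ℕ → moderateGroup p := fun k => ⟨_, hmod k⟩
  refine ⟨QuotientAddGroup.mk (g 0), Set.mem_iInter.2 fun k => ⟨g k, ?_, ?_⟩⟩
  · refine QuotientAddGroup.eq_iff_sub_mem.2 (isNegligible_of_eventually_forall_le hL ?_)
    filter_upwards [hL_level, hL.eventually_ge_atTop k] with ε h hk i hi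
    exact (h k hk i hi).2.2
  · filter_upwards [hL_level, hL.eventually_ge_atTop k] with ε h hk
    exact (h k hk 0 (Nat.zero_le _)).1

end Diagonal

theorem saturation_general
    {E : Type*} [AddCommGroup E] [Module ℝ E]
    (p : ℕ → Seminorm ℝ E)
    (A : ℕ → Set (Colombeau p)) (hint : ∀ n, IsInternal p (A n))
    (hne : ∀ n, (A n).Nonempty) (hdec : ∀ n, A (n + 1) ⊆ A n)
    (t : ℕ → ℝ)
    (hbd : ∀ n, ∀ v ∈ A n, seminormLeAlpha p n v (-(t n))) :
    (⋂ n, A n).Nonempty := by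
  choose Anet hAnet using hint
  choose u hu using hne
  have hanti : Antitone A := antitone_nat_of_succ_le hdec
  obtain rfl : A = fun n => internalSet p (Anet n) := funext hAnet
  exact nonempty_iInter_internalSet u (fun n k hk => hanti hk (hu n))
    fun n i hi => hbd i (u n) (hanti hi (hu n))

/-- **Saturation.** With `(p_n)` increasing, a decreasing chain of
non-empty internal subsets `A_n` of `𝒢_E` satisfying `p_n(v) ≤ α^{-t_n}` for all
`v ∈ A_n` (with `t_n > 0`) has non-void intersection. -/
theorem saturation
    {E : Type*} [AddCommGroup E] [Module ℝ E]
    (p : ℕ → Seminorm ℝ E) (hp : Monotone p)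
    (A : ℕ → Set (Colombeau p)) (hint : ∀ n, IsInternal p (A n))
    (hne : ∀ n, (A n).Nonempty) (hdec : ∀ n, A (n + 1) ⊆ A n)
    (t : ℕ → ℝ) (ht : ∀ n, 0 < t n)
    (hbd : ∀ n, ∀ v ∈ A n, seminormLeAlpha p n v (-(t n))) :
    (⋂ n, A n).Nonempty :=
  saturation_general p A hint hne hdec t hbd

end ColombeauPaper
end
end

section
/- Let E and F be locally convex spaces. (1) If A = [(A_ε)] ⊆ G_E and B = [(B_ε)] ⊆ G_F are internal, then, under the canonical identification G_{E×F} ≅ G_E × G_F, the product A × B = [(A_ε × B_ε)] is an internal subset of G_E × G_F. (2) If A = [(A_ε)] ⊆ G_E × G_F is internal, then the projection proj_{G_E}(A) of A onto G_E satisfies proj_{G_E}(A) ⊆ [(proj_E(A_ε))]; if in addition A has a sharply bounded representative net, then proj_{G_E}(A) = [(proj_E(A_ε))] and hence proj_{G_E}(A) is internal. -/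
open Filter Topology Asymptotics

noncomputable section

namespace ColombeauPaper

variable {ι κ : Type*} {E : Type*} [AddCommGroup E] [Module ℝ E]
  {F : Type*} [AddCommGroup F] [Module ℝ F]

/-!
Representatives can be taken componentwise: a pair of moderate nets is moderate for the
seminorms `max (p_i, q_j)`, and `prodIdent` sends its class to the pair of classes. This gives
the product formula and the inclusion for projections. For the reverse inclusion, given `u_ε`
in `proj_E(A_ε)` one selects `(u_ε, v_ε) ∈ A_ε`; the selected net need not be moderate in
general, and sharp boundedness of `(A_ε)` is exactly what makes it so.
-/

lemma eventually_zpow_neg_le_zpow_neg {k l : ℕ} (hkl : k ≤ l) :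
    ∀ᶠ ε in 𝓝[>] (0 : ℝ), ε ^ (-(k : ℤ)) ≤ ε ^ (-(l : ℤ)) := by
  filter_upwards [Ioo_mem_nhdsGT (zero_lt_one' ℝ)] with ε hε
  exact zpow_le_zpow_right_of_le_one₀ hε.1 hε.2.le (by omega)

lemma IsModerate.of_eventually_mem {p : ι → Seminorm ℝ E} {A : ℝ → Set E} {u : ℝ → E}
    (hA : SharplyBoundedNet p A) (hu : ∀ᶠ ε in 𝓝[>] (0 : ℝ), u ε ∈ A ε) : IsModerate p u := by
  intro i
  obtain ⟨M, hM⟩ := hA i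
  exact ⟨M, by filter_upwards [hM, hu] with ε hA hu using hA _ hu⟩

lemma mk_eq_mk_of_eventuallyEq {p : ι → Seminorm ℝ E} {u v : moderateGroup p}
    (huv : (u : ℝ → E) =ᶠ[𝓝[>] (0 : ℝ)] v) :
    (QuotientAddGroup.mk u : Colombeau p) = QuotientAddGroup.mk v := by
  rw [QuotientAddGroup.eq]
  intro i m
  filter_upwards [huv, self_mem_nhdsWithin] with ε hε hpos
  have hzero : ((-u + v : moderateGroup p) : ℝ → E) ε = 0 := by
    simp [hε]
  rw [hzero, map_zero]
  exact pow_nonneg (le_of_lt hpos) m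

lemma IsModerate.prodMk {p : ι → Seminorm ℝ E} {q : κ → Seminorm ℝ F} {u : ℝ → E} {v : ℝ → F}
    (hu : IsModerate p u) (hv : IsModerate q v) :
    IsModerate (prodSeminorm p q) fun ε => (u ε, v ε) := by
  rintro ⟨i, j⟩
  obtain ⟨M, hM⟩ := hu i
  obtain ⟨N, hN⟩ := hv j
  refine ⟨max M N, ?_⟩
  filter_upwards [hM, hN, eventually_zpow_neg_le_zpow_neg (le_max_left M N),
    eventually_zpow_neg_le_zpow_neg (le_max_right M N)] with ε hu hv hM hN
  rw [prodSeminorm_apply]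
  exact max_le (hu.trans hM) (hv.trans hN)

def moderateProdMk (p : ι → Seminorm ℝ E) (q : κ → Seminorm ℝ F)
    (u : moderateGroup p) (v : moderateGroup q) : moderateGroup (prodSeminorm p q) :=
  ⟨fun ε => ((u : ℝ → E) ε, (v : ℝ → F) ε), IsModerate.prodMk u.2 v.2⟩

section Product

variable [Nonempty ι] [Nonempty κ] (p : ι → Seminorm ℝ E) (q : κ → Seminorm ℝ F)

lemma prodIdent_mk (w : moderateGroup (prodSeminorm p q)) :
    prodIdent p q (QuotientAddGroup.mk w) =
      (QuotientAddGroup.mk (prodFstAux p q w), QuotientAddGroup.mk (prodSndAux p q w)) :=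
  rfl

lemma prodIdent_mk_moderateProdMk (u : moderateGroup p) (v : moderateGroup q) :
    prodIdent p q (QuotientAddGroup.mk (moderateProdMk p q u v)) =
      (QuotientAddGroup.mk u, QuotientAddGroup.mk v) :=
  rfl

theorem prodIdent_image_internalSet_prod (A : ℝ → Set E) (B : ℝ → Set F) :
    prodIdent p q '' internalSet (prodSeminorm p q) (fun ε => A ε ×ˢ B ε) =
      internalSet p A ×ˢ internalSet q B := by
  ext x
  constructor
  · rintro ⟨_, ⟨w, rfl, hw⟩, rfl⟩
    rw [prodIdent_mk]
    exact ⟨⟨_, rfl, hw.mono fun ε h => h.1⟩, ⟨_, rfl, hw.mono fun ε h => h.2⟩⟩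
  · rintro ⟨⟨u, hu, huA⟩, ⟨v, hv, hvB⟩⟩
    refine ⟨_, ⟨moderateProdMk p q u v, rfl, huA.and hvB⟩, ?_⟩
    rw [prodIdent_mk_moderateProdMk, hu, hv]

theorem fst_image_prodIdent_image_internalSet_subset (C : ℝ → Set (E × F)) :
    Prod.fst '' (prodIdent p q '' internalSet (prodSeminorm p q) C) ⊆
      internalSet p (fun ε => Prod.fst '' C ε) := by
  rintro _ ⟨_, ⟨_, ⟨w, rfl, hw⟩, rfl⟩, rfl⟩
  exact ⟨prodFstAux p q w, rfl, hw.mono fun ε h => ⟨_, h, rfl⟩⟩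

theorem fst_image_prodIdent_image_internalSet_of_sharplyBoundedNet {C : ℝ → Set (E × F)}
    (hC : SharplyBoundedNet (prodSeminorm p q) C) :
    Prod.fst '' (prodIdent p q '' internalSet (prodSeminorm p q) C) =
      internalSet p (fun ε => Prod.fst '' C ε) := by
  refine (fst_image_prodIdent_image_internalSet_subset p q C).antisymm ?_
  rintro _ ⟨u, rfl, hu⟩
  obtain ⟨c, hc⟩ : ∃ c : ℝ → E × F, ∀ᶠ ε in 𝓝[>] (0 : ℝ), c ε ∈ C ε ∧ (c ε).1 = (u : ℝ → E) ε :=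
    Filter.skolem.mp hu
  let w : moderateGroup (prodSeminorm p q) :=
    ⟨c, IsModerate.of_eventually_mem hC (hc.mono fun ε h => h.1)⟩
  refine ⟨_, ⟨_, ⟨w, rfl, hc.mono fun ε h => h.1⟩, rfl⟩, ?_⟩
  exact mk_eq_mk_of_eventuallyEq (hc.mono fun ε h => h.2)

end Product

/-- (1) Under the canonical identification `𝒢_{E×F} ≅ 𝒢_E × 𝒢_F`,
the product of internal sets: `A × B = [(A_ε × B_ε)]` is internal in `𝒢_E × 𝒢_F`.
(2) The projection of an internal subset of `𝒢_E × 𝒢_F` onto `𝒢_E` is contained in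
`[(proj_E(A_ε))]`, with equality (hence internality) when there is a sharply bounded
representative net. -/
theorem products_and_projections
    {E : Type*} [AddCommGroup E] [Module ℝ E] {F : Type*} [AddCommGroup F] [Module ℝ F]
    {ι κ : Type*} [Nonempty ι] [Nonempty κ]
    (p : ι → Seminorm ℝ E) (q : κ → Seminorm ℝ F) :
    (∀ (Anet : ℝ → Set E) (Bnet : ℝ → Set F),
      internalSet p Anet ×ˢ internalSet q Bnet =
        prodIdent p q '' internalSet (prodSeminorm p q) (fun ε => Anet ε ×ˢ Bnet ε) ∧
      IsInternalProd p q (internalSet p Anet ×ˢ internalSet q Bnet)) ∧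
    (∀ Cnet : ℝ → Set (E × F),
      Prod.fst '' (prodIdent p q '' internalSet (prodSeminorm p q) Cnet) ⊆
        internalSet p (fun ε => Prod.fst '' Cnet ε)) ∧
    (∀ Cnet : ℝ → Set (E × F), SharplyBoundedNet (prodSeminorm p q) Cnet →
      Prod.fst '' (prodIdent p q '' internalSet (prodSeminorm p q) Cnet) =
        internalSet p (fun ε => Prod.fst '' Cnet ε)) := by
  refine ⟨fun A B => ?_, fst_image_prodIdent_image_internalSet_subset p q,
    fun C hC => fst_image_prodIdent_image_internalSet_of_sharplyBoundedNet p q hC⟩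
  have hAB := (prodIdent_image_internalSet_prod p q A B).symm
  exact ⟨hAB, _, hAB⟩

end ColombeauPaper
end
end

section
/- Let f be an internal map from A ⊆ R̃^d to R̃^{d'}. If A and f(A) are sharply bounded, then both A and f(A) are internal subsets of R̃^d and R̃^{d'} respectively. -/
open Filter Topology Asymptotics

noncomputable section

namespace ColombeauPaper

variable {ι κ : Type*} {E : Type*} [AddCommGroup E] [Module ℝ E]
  {F : Type*} [AddCommGroup F] [Module ℝ F]

/-!
Let `C_ε` generate the graph of `f` and let `|y| ≤ α^{-N}` for all `y ∈ f(A)`. Cutting the net down to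
`D_ε = {(x, y) ∈ C_ε : ‖y‖ ≤ ε^{-N-1}}` loses no point of the graph, since every representative
of a point of `f(A)` eventually satisfies that bound. Hence `A = [(π₁ D_ε)]`: a net eventually in
`π₁ D_ε` lifts to a net eventually in `D_ε`, whose second component is moderate thanks to the
cut-off, so it represents a point of the graph. Exchanging the factors, the bound on `A` gives
`f(A) = [(π₂ D'_ε)]` in the same way.
-/

lemma zpow_neg_add_two_mul_le {ε : ℝ} (hε : 0 < ε) (hε2 : ε ≤ 1 / 2) (N : ℕ) :
    ε ^ (-(N : ℤ)) + 2 * ε ≤ ε ^ (-((N + 1 : ℕ) : ℤ)) := by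
  rw [zpow_neg_natCast_eq, zpow_neg_natCast_eq, zpow_natCast, zpow_natCast, pow_succ]
  have h2 : 2 ≤ ε⁻¹ := by rw [le_inv_comm₀ two_pos hε]; linarith
  have h1 : 1 ≤ ε⁻¹ ^ N := one_le_pow₀ (by linarith)
  nlinarith

lemma isNegligible_sub_of_mk_eq_s13 {p : ι → Seminorm ℝ E} {a b : moderateGroup p}
    (h : (QuotientAddGroup.mk a : Colombeau p) = QuotientAddGroup.mk b) :
    IsNegligible p (fun ε => (a : ℝ → E) ε - (b : ℝ → E) ε) :=
  QuotientAddGroup.eq_iff_sub_mem.mp h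

def moderatePair (p : ι → Seminorm ℝ E) (q : κ → Seminorm ℝ F) (u : moderateGroup p)
    (v : moderateGroup q) : moderateGroup (prodSeminorm p q) :=
  ⟨fun ε => ((u : ℝ → E) ε, (v : ℝ → F) ε), by
    rintro ⟨i, j⟩
    obtain ⟨M, hM⟩ := u.2 i
    obtain ⟨N, hN⟩ := v.2 j
    refine ⟨max M N, ?_⟩
    filter_upwards [hM, hN, small_mem] with ε hu hv ⟨hε, hε2⟩
    have hmono : ∀ k ≤ max M N, ε ^ (-(k : ℤ)) ≤ ε ^ (-((max M N : ℕ) : ℤ)) := fun k hk =>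
      zpow_le_zpow_right_of_le_one₀ hε (by linarith) (by omega)
    rw [prodSeminorm_apply]
    exact max_le (hu.trans (hmono M (le_max_left _ _))) (hv.trans (hmono N (le_max_right _ _)))⟩

lemma mem_image_prodIdent_internalSet [Nonempty ι] [Nonempty κ] {p : ι → Seminorm ℝ E}
    {q : κ → Seminorm ℝ F} {Cnet : ℝ → Set (E × F)} {z : Colombeau p × Colombeau q} :
    z ∈ prodIdent p q '' internalSet (prodSeminorm p q) Cnet ↔
      ∃ (u : moderateGroup p) (v : moderateGroup q),
        (QuotientAddGroup.mk u, QuotientAddGroup.mk v) = z ∧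
        ∀ᶠ ε in 𝓝[>] (0 : ℝ), ((u : ℝ → E) ε, (v : ℝ → F) ε) ∈ Cnet ε := by
  constructor
  · rintro ⟨_, ⟨w, rfl, hw⟩, rfl⟩
    exact ⟨prodFstAux p q w, prodSndAux p q w, rfl, hw⟩
  · rintro ⟨u, v, rfl, huv⟩
    exact ⟨_, ⟨moderatePair p q u v, rfl, huv⟩, rfl⟩

lemma IsInternalProd.image_swap [Nonempty ι] [Nonempty κ] {p : ι → Seminorm ℝ E}
    {q : κ → Seminorm ℝ F} {C : Set (Colombeau p × Colombeau q)}
    (hC : IsInternalProd p q C) : IsInternalProd q p (Prod.swap '' C) := by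
  obtain ⟨Cnet, rfl⟩ := hC
  refine ⟨fun ε => Prod.swap ⁻¹' Cnet ε, Set.ext fun z => ?_⟩
  rw [Set.image_swap_eq_preimage_swap, Set.mem_preimage, mem_image_prodIdent_internalSet,
    mem_image_prodIdent_internalSet]
  constructor <;> rintro ⟨u, v, huv, hε⟩
  · exact ⟨v, u, by rw [← Prod.swap_swap z, ← huv]; rfl, hε⟩
  · exact ⟨v, u, by rw [← huv]; rfl, hε⟩

section Normed

variable {V W : Type*} [NormedAddCommGroup W] [NormedSpace ℝ W]

lemma exists_moderate_snd_mem {D : ℝ → Set (V × W)}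
    (hD : SharplyBoundedNetN fun ε => Prod.snd '' D ε) {u : ℝ → V}
    (hu : ∀ᶠ ε in 𝓝[>] (0 : ℝ), u ε ∈ Prod.fst '' D ε) :
    ∃ v : moderateGroup (normFamily W), ∀ᶠ ε in 𝓝[>] (0 : ℝ), (u ε, (v : ℝ → W) ε) ∈ D ε := by
  have hchoice : ∀ ε, ∃ y : W, u ε ∈ Prod.fst '' D ε → (u ε, y) ∈ D ε := by
    intro ε
    by_cases h : u ε ∈ Prod.fst '' D ε
    · obtain ⟨z, hz, hzu⟩ := h
      exact ⟨z.2, fun _ => hzu ▸ hz⟩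
    · exact ⟨0, fun h' => absurd h' h⟩
  choose v hv using hchoice
  have hvD : ∀ᶠ ε in 𝓝[>] (0 : ℝ), (u ε, v ε) ∈ D ε := hu.mono hv
  obtain ⟨M, hM⟩ := hD
  refine ⟨⟨v, fun _ => ⟨M, ?_⟩⟩, hvD⟩
  filter_upwards [hM, hvD] with ε hMε hvε
  exact hMε _ ⟨_, hvε, rfl⟩

variable [NormedAddCommGroup V] [NormedSpace ℝ V]

lemma eventually_norm_le_of_normLeAlpha {u : GN V} {N : ℕ} (hu : normLeAlpha u (-(N : ℝ)))
    {w : moderateGroup (normFamily V)} (hw : (QuotientAddGroup.mk w : GN V) = u) :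
    ∀ᶠ ε in 𝓝[>] (0 : ℝ), ‖(w : ℝ → V) ε‖ ≤ ε ^ (-((N + 1 : ℕ) : ℤ)) := by
  obtain ⟨a, n, rfl, hn, ha⟩ := hu
  filter_upwards [ha, hn 1, isNegligible_sub_of_mk_eq_s13 hw () 1, small_mem]
    with ε haε hnε hwa ⟨hε, hε2⟩
  rw [Real.rpow_neg hε.le, Real.rpow_natCast, ← zpow_natCast, ← zpow_neg] at haε
  rw [pow_one] at hnε hwa
  have htri : ‖(w : ℝ → V) ε‖ ≤ ‖(a : ℝ → V) ε‖ + ‖(w : ℝ → V) ε - (a : ℝ → V) ε‖ :=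
    norm_le_norm_add_norm_sub' _ _
  have hwa' : ‖(w : ℝ → V) ε - (a : ℝ → V) ε‖ ≤ ε := hwa
  linarith [zpow_neg_add_two_mul_le hε hε2 N, (abs_le.mp hnε).2]

theorem isInternal_image_fst {C : Set (GN V × GN W)}
    (hC : IsInternalProd (normFamily V) (normFamily W) C) (hbdd : SharplyBounded (Prod.snd '' C)) :
    IsInternal (normFamily V) (Prod.fst '' C) := by
  obtain ⟨Cnet, rfl⟩ := hC
  obtain ⟨N, hN⟩ := hbdd
  set D : ℝ → Set (V × W) := fun ε => {z ∈ Cnet ε | ‖z.2‖ ≤ ε ^ (-((N + 1 : ℕ) : ℤ))}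
  refine ⟨fun ε => Prod.fst '' D ε, Set.ext fun x => ⟨?_, ?_⟩⟩
  · rintro ⟨z, hz, rfl⟩
    obtain ⟨u, v, rfl, huv⟩ := mem_image_prodIdent_internalSet.mp hz
    refine ⟨u, rfl, ?_⟩
    filter_upwards [huv, eventually_norm_le_of_normLeAlpha (hN _ ⟨_, hz, rfl⟩) rfl] with ε h hv
    exact ⟨_, ⟨h, hv⟩, rfl⟩
  · rintro ⟨u, rfl, hu⟩
    have hD : SharplyBoundedNetN fun ε => Prod.snd '' D ε :=
      ⟨N + 1, Eventually.of_forall fun ε => by rintro _ ⟨z, hz, rfl⟩; exact hz.2⟩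
    obtain ⟨v, hv⟩ := exists_moderate_snd_mem hD hu
    exact ⟨_, mem_image_prodIdent_internalSet.mpr ⟨u, v, rfl, hv.mono fun ε h => h.1⟩, rfl⟩

theorem isInternal_image_snd {C : Set (GN V × GN W)}
    (hC : IsInternalProd (normFamily V) (normFamily W) C) (hbdd : SharplyBounded (Prod.fst '' C)) :
    IsInternal (normFamily W) (Prod.snd '' C) := by
  have h := isInternal_image_fst hC.image_swap (by rwa [Set.image_image])
  rwa [Set.image_image] at h

end Normed

/-- If `f` is an internal map `A ⊆ ℝ̃^d → ℝ̃^{d'}` and `A` and `f(A)` are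
sharply bounded, then `A` and `f(A)` are internal. -/
theorem internal_map_domain_and_range_internal (d d' : ℕ)
    (A : Set (GN (EuclideanSpace ℝ (Fin d))))
    (f : GN (EuclideanSpace ℝ (Fin d)) → GN (EuclideanSpace ℝ (Fin d')))
    (hgraph : IsInternalProd (normFamily (EuclideanSpace ℝ (Fin d)))
      (normFamily (EuclideanSpace ℝ (Fin d')))
      {z : GN (EuclideanSpace ℝ (Fin d)) × GN (EuclideanSpace ℝ (Fin d')) |
        z.1 ∈ A ∧ z.2 = f z.1})
    (hA : SharplyBounded A) (hfA : SharplyBounded (f '' A)) :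
    IsInternal (normFamily (EuclideanSpace ℝ (Fin d))) A ∧
    IsInternal (normFamily (EuclideanSpace ℝ (Fin d'))) (f '' A) := by
  have hG : {z : GN (EuclideanSpace ℝ (Fin d)) × GN (EuclideanSpace ℝ (Fin d')) |
      z.1 ∈ A ∧ z.2 = f z.1} = A.graphOn f := by
    ext z
    simp [eq_comm]
  rw [hG] at hgraph
  constructor
  · simpa only [Set.image_fst_graphOn] using
      isInternal_image_fst hgraph (by rwa [Set.image_snd_graphOn])
  · simpa only [Set.image_snd_graphOn] using
      isInternal_image_snd hgraph (by rwa [Set.image_fst_graphOn])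

end ColombeauPaper
end
end
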